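/- Let N ≥ T ≥ 500 be natural numbers, set a = √(2·log N) and b = √(2·log T − 2·log(3·2^{−3/2}·(2·log T)^{3/2})). Then (b + ei(b)/Φᶜ(b)) / (1/(√(2π)·a²) + a) ≥ √( (log T − log(3·(log T)^{3/2})) / log N ). -/

import Mathlib

open MeasureTheory

/-- The standard normal density `φ(x) = (2π)^{-1/2} exp(-x²/2)`. -/
noncomputable def stdNormalPDF (x : ℝ) : ℝ :=
  (Real.sqrt (2 * Real.pi))⁻¹ * Real.exp (-x ^ 2 / 2)

/-- The standard normal complementary CDF `Φᶜ(x) = ∫_x^∞ φ(u) du`. -/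
noncomputable def stdNormalCCDF (x : ℝ) : ℝ :=
  ∫ u in Set.Ioi x, stdNormalPDF u

/-- The standard expected improvement `ei(x) = φ(x) - x·Φᶜ(x)`. -/
noncomputable def stdEI (x : ℝ) : ℝ :=
  stdNormalPDF x - x * stdNormalCCDF x

/-!
Since `ei(b) = φ(b) - b Φᶜ(b)`, the numerator is the Mills ratio `φ(b)/Φᶜ(b)`. Integrating
`φ(u)(1 - 3/u⁴) = d/du [φ(u)(1/u³ - 1/u)]` over `(x, ∞)` gives `Φᶜ(x)(x⁴ - 3) ≤ φ(x)(x³ - x)`, so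
for `b ≥ 2` the Mills ratio exceeds `b + 1/(√(2π) b²)`, which dominates `b (1/(√(2π) a²) + a)/a`
as soon as `b ≤ a`. The right-hand side is exactly `b/a`, because
`3·2^{-3/2}(2 log T)^{3/2} = 3 (log T)^{3/2}`, and `log T ≥ 6` makes `b ≥ 2`.
-/

open Set Filter Real ProbabilityTheory

lemma stdNormalPDF_eq_gaussianPDFReal : stdNormalPDF = gaussianPDFReal 0 1 := by
  ext x
  simp [stdNormalPDF, gaussianPDFReal]

lemma stdNormalPDF_pos (x : ℝ) : 0 < stdNormalPDF x := by
  rw [stdNormalPDF_eq_gaussianPDFReal]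
  exact gaussianPDFReal_pos _ _ _ one_ne_zero

lemma integrable_stdNormalPDF : Integrable stdNormalPDF := by
  rw [stdNormalPDF_eq_gaussianPDFReal]
  exact integrable_gaussianPDFReal _ _

lemma continuous_stdNormalPDF : Continuous stdNormalPDF := by
  unfold stdNormalPDF
  fun_prop

lemma hasDerivAt_stdNormalPDF (x : ℝ) :
    HasDerivAt stdNormalPDF (-x * stdNormalPDF x) x := by
  have h : HasDerivAt (fun u : ℝ => -u ^ 2 / 2) (-x) x := by
    simpa using ((hasDerivAt_pow 2 x).neg.div_const 2).congr_deriv (by ring : _ = -x)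
  exact (h.exp.const_mul (√(2 * π))⁻¹).congr_deriv (by unfold stdNormalPDF; ring)

lemma tendsto_stdNormalPDF_atTop : Tendsto stdNormalPDF atTop (nhds 0) := by
  have h : Tendsto (fun x : ℝ => -x ^ 2 / 2) atTop atBot :=
    (tendsto_neg_atBot_iff.mpr (tendsto_pow_atTop two_ne_zero)).atBot_div_const two_pos
  have := (tendsto_exp_atBot.comp h).const_mul (√(2 * π))⁻¹
  rw [mul_zero] at this
  exact this

lemma stdNormalCCDF_pos (x : ℝ) : 0 < stdNormalCCDF x := by
  have hsupp : Function.support stdNormalPDF = univ :=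
    eq_univ_of_forall fun u => (stdNormalPDF_pos u).ne'
  rw [stdNormalCCDF, setIntegral_pos_iff_support_of_nonneg_ae
    (ae_of_all _ fun u => (stdNormalPDF_pos u).le) integrable_stdNormalPDF.integrableOn,
    hsupp, univ_inter]
  simp

lemma add_stdEI_div_stdNormalCCDF (x : ℝ) :
    x + stdEI x / stdNormalCCDF x = stdNormalPDF x / stdNormalCCDF x := by
  have := (stdNormalCCDF_pos x).ne'
  rw [stdEI, sub_div, mul_div_cancel_right₀ _ this]
  ring

lemma hasDerivAt_stdNormalPDF_mul {x : ℝ} (hx : x ≠ 0) :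
    HasDerivAt (fun u => stdNormalPDF u * (1 / u ^ 3 - 1 / u))
      (stdNormalPDF x * (1 - 3 / x ^ 4)) x := by
  have h : HasDerivAt (fun u : ℝ => 1 / u ^ 3 - 1 / u) (1 / x ^ 2 - 3 / x ^ 4) x := by
    simp only [one_div]
    refine (((hasDerivAt_pow 3 x).inv (pow_ne_zero 3 hx)).sub (hasDerivAt_inv hx)).congr_deriv ?_
    field_simp
    ring
  refine ((hasDerivAt_stdNormalPDF x).mul h).congr_deriv ?_
  field_simp
  ring

lemma integrableOn_stdNormalPDF_mul {x : ℝ} (hx : 0 < x) :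
    IntegrableOn (fun u => stdNormalPDF u * (1 - 3 / u ^ 4)) (Ioi x) := by
  refine (integrable_stdNormalPDF.integrableOn.mul_const (1 + 3 / x ^ 4)).mono' ?_ ?_
  · refine ContinuousOn.aestronglyMeasurable ?_ measurableSet_Ioi
    refine continuous_stdNormalPDF.continuousOn.mul (continuousOn_const.sub ?_)
    exact continuousOn_const.div (continuous_pow 4).continuousOn
      fun u hu => pow_ne_zero 4 (hx.trans hu).ne'
  · refine (ae_restrict_iff' measurableSet_Ioi).mpr (ae_of_all _ fun u hu => ?_)
    have hu : 0 < u := hx.trans hu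
    have : 3 / u ^ 4 ≤ 3 / x ^ 4 := by gcongr; exact le_of_lt ‹u ∈ Ioi x›
    rw [norm_mul, Real.norm_of_nonneg (stdNormalPDF_pos u).le]
    gcongr
    · exact (stdNormalPDF_pos u).le
    rw [Real.norm_eq_abs, abs_le]
    constructor <;> nlinarith [div_nonneg zero_le_three (pow_pos hu 4).le]

lemma stdNormalCCDF_mul_le {x : ℝ} (hx : 0 < x) :
    stdNormalCCDF x * (x ^ 4 - 3) ≤ stdNormalPDF x * (x ^ 3 - x) := by
  have hint : ∫ u in Ioi x, stdNormalPDF u * (1 - 3 / u ^ 4)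
      = stdNormalPDF x * (1 / x - 1 / x ^ 3) := by
    have hlim : Tendsto (fun u => stdNormalPDF u * (1 / u ^ 3 - 1 / u)) atTop (nhds 0) := by
      have h3 := (tendsto_pow_atTop (α := ℝ) three_ne_zero).inv_tendsto_atTop
      simpa using tendsto_stdNormalPDF_atTop.mul (h3.sub tendsto_inv_atTop_zero)
    rw [integral_Ioi_of_hasDerivAt_of_tendsto'
      (fun u hu => hasDerivAt_stdNormalPDF_mul (hx.trans_le hu).ne')
      (integrableOn_stdNormalPDF_mul hx) hlim]
    ring
  have hmono : stdNormalCCDF x * (1 - 3 / x ^ 4)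
      ≤ ∫ u in Ioi x, stdNormalPDF u * (1 - 3 / u ^ 4) := by
    rw [stdNormalCCDF, ← integral_mul_const]
    refine setIntegral_mono_on (integrable_stdNormalPDF.integrableOn.mul_const _)
      (integrableOn_stdNormalPDF_mul hx) measurableSet_Ioi fun u hu => ?_
    have : 3 / u ^ 4 ≤ 3 / x ^ 4 := by gcongr; exact le_of_lt hu
    nlinarith [stdNormalPDF_pos u]
  rw [hint] at hmono
  have h4 : 0 < x ^ 4 := by positivity
  calc stdNormalCCDF x * (x ^ 4 - 3) = stdNormalCCDF x * (1 - 3 / x ^ 4) * x ^ 4 := by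
        field_simp
    _ ≤ stdNormalPDF x * (1 / x - 1 / x ^ 3) * x ^ 4 := by gcongr
    _ = stdNormalPDF x * (x ^ 3 - x) := by field_simp

lemma add_one_div_le_stdNormalPDF_div_stdNormalCCDF {x : ℝ} (hx : 2 ≤ x) :
    x + 1 / (√(2 * π) * x ^ 2) ≤ stdNormalPDF x / stdNormalCCDF x := by
  have hs : 2 ≤ √(2 * π) := (le_sqrt zero_le_two (by positivity)).mpr (by nlinarith [pi_gt_three])
  have hx3 : 0 < x ^ 3 - x := by
    have := mul_pos (by linarith : 0 < x) (by nlinarith : 0 < x ^ 2 - 1)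
    linarith
  have hpoly : (x + 1 / (√(2 * π) * x ^ 2)) * (x ^ 3 - x) ≤ x ^ 4 - 3 := by
    have h : (x ^ 2 - 1) / (√(2 * π) * x) ≤ x ^ 2 - 3 := by
      rw [div_le_iff₀ (by positivity)]
      nlinarith [mul_le_mul_of_nonneg_left hs (by nlinarith : 0 ≤ (x ^ 2 - 3) * x)]
    calc (x + 1 / (√(2 * π) * x ^ 2)) * (x ^ 3 - x)
        = x ^ 4 - x ^ 2 + (x ^ 2 - 1) / (√(2 * π) * x) := by
          field_simp
      _ ≤ x ^ 4 - 3 := by linarith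
  rw [le_div_iff₀ (stdNormalCCDF_pos x)]
  refine le_of_mul_le_mul_right ?_ hx3
  calc (x + 1 / (√(2 * π) * x ^ 2)) * stdNormalCCDF x * (x ^ 3 - x)
      = stdNormalCCDF x * ((x + 1 / (√(2 * π) * x ^ 2)) * (x ^ 3 - x)) := by ring
    _ ≤ stdNormalCCDF x * (x ^ 4 - 3) := by gcongr; exact (stdNormalCCDF_pos x).le
    _ ≤ stdNormalPDF x * (x ^ 3 - x) := stdNormalCCDF_mul_le (by linarith)

lemma div_le_stdNormalPDF_div_stdNormalCCDF_div {a b : ℝ} (hb : 2 ≤ b) (hab : b ≤ a) :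
    b / a ≤ stdNormalPDF b / stdNormalCCDF b / (1 / (√(2 * π) * a ^ 2) + a) := by
  have hb0 : 0 < b := by linarith
  have ha0 : 0 < a := hb0.trans_le hab
  rw [le_div_iff₀ (by positivity)]
  calc b / a * (1 / (√(2 * π) * a ^ 2) + a) = b + b / (√(2 * π) * a ^ 3) := by
        field_simp
        ring
    _ ≤ b + b / (√(2 * π) * b ^ 3) := by gcongr
    _ = b + 1 / (√(2 * π) * b ^ 2) := by field_simp
    _ ≤ stdNormalPDF b / stdNormalCCDF b := add_one_div_le_stdNormalPDF_div_stdNormalCCDF hb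

lemma rpow_neg_mul_mul_rpow {c x : ℝ} (hc : 0 < c) (hx : 0 ≤ x) (p : ℝ) :
    c ^ (-p) * (c * x) ^ p = x ^ p := by
  rw [mul_rpow hc.le hx, rpow_neg hc.le, inv_mul_cancel_left₀ (rpow_pos_of_pos hc p).ne']

lemma six_le_log {x : ℝ} (hx : 500 ≤ x) : 6 ≤ log x := by
  rw [le_log_iff_exp_le (by linarith)]
  calc exp 6 = exp 1 ^ 6 := by rw [← exp_nat_mul]; norm_num
    _ ≤ 2.7182818286 ^ 6 := by gcongr; exact exp_one_lt_d9.le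
    _ ≤ x := by norm_num; linarith

/-- `log L ≤ L/6 - 1 + log 6` is the tangent-line bound for `log` at `L = 6`. -/
lemma two_le_sub_log_three_mul_rpow {L : ℝ} (hL : 6 ≤ L) :
    2 ≤ L - log (3 * L ^ ((3 : ℝ) / 2)) := by
  have hL0 : 0 < L := by linarith
  have hlogL : log L ≤ L / 6 - 1 + (log 2 + log 3) := by
    have h := log_le_sub_one_of_pos (show 0 < L / 6 by positivity)
    rw [log_div hL0.ne' (by norm_num), show (6 : ℝ) = 2 * 3 by norm_num,
      log_mul two_ne_zero three_ne_zero] at h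
    linarith
  rw [log_mul three_ne_zero (by positivity), log_rpow hL0]
  linarith [log_two_lt_d9, log_three_lt_d9]

/-- The 'bounding the right factor' step in the proof of the paper's main theorem
(recall `ei'(x) = −Φᶜ(x)`, so `b + ei(b)/Φᶜ(b) = b − ei(b)/ei'(b)`). -/
theorem stmt17 (N T : ℕ) (hT : 500 ≤ T) (hN : T ≤ N)
    (a b : ℝ) (ha : a = Real.sqrt (2 * Real.log N))
    (hb : b = Real.sqrt (2 * Real.log T
      - 2 * Real.log (3 * (2 : ℝ) ^ (-(3 : ℝ) / 2) * (2 * Real.log T) ^ ((3 : ℝ) / 2)))) :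
    (b + stdEI b / stdNormalCCDF b) / (1 / (Real.sqrt (2 * Real.pi) * a ^ 2) + a)
      ≥ Real.sqrt ((Real.log T - Real.log (3 * (Real.log T) ^ ((3 : ℝ) / 2)))
          / Real.log N) := by
  have hT6 : 6 ≤ log T := six_le_log (by exact_mod_cast hT)
  have hTN : log T ≤ log N :=
    log_le_log (by norm_cast; omega) (by exact_mod_cast hN)
  set M := log (3 * log T ^ ((3 : ℝ) / 2))
  have hM : 2 ≤ log T - M := two_le_sub_log_three_mul_rpow hT6
  have hM0 : 0 ≤ M :=
    log_nonneg (by linarith [one_le_rpow (by linarith : 1 ≤ log T) (by norm_num : (0 : ℝ) ≤ 3 / 2)])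
  have hb' : b = √(2 * (log T - M)) := by
    rw [hb, neg_div, mul_assoc 3, rpow_neg_mul_mul_rpow two_pos (by linarith), mul_sub]
  have hb2 : 2 ≤ b := by
    rw [hb', le_sqrt zero_le_two (by linarith)]
    linarith
  have hab : b ≤ a := by
    rw [hb', ha]
    exact sqrt_le_sqrt (by linarith)
  have hrhs : √((log T - M) / log N) = b / a := by
    rw [hb', ha, ← sqrt_div (by linarith), mul_div_mul_left _ _ two_ne_zero]
  rw [add_stdEI_div_stdNormalCCDF, ge_iff_le, hrhs]
  exact div_le_stdNormalPDF_div_stdNormalCCDF_div hb2 hab
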